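/- The claim of Corollary 2 fails without integrability of the orthogonal distribution: for the Hopf fibration foliation of the round S³ (fibers the Hopf circles), which is minimal with non-integrable orthogonal distribution and all leaves compact, there exists a Killing vector field on S³ that is not foliation preserving. -/

import Mathlib

/-! Identify `ℂ²` with the quaternions, `(z₀, z₁) ↦ z₀ + z₁ j`. Left multiplication by `-j` is
an isometry of `S³`, hence Killing, but it anticommutes with left multiplication by `i`, the
generator of the Hopf action. So its bracket with the Hopf field `T(z) = i z` is `2 i j z`, a
nonzero vector complex-orthogonal to `z`, hence never tangent to the Hopf fibre `ℝ · i z`. -/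

open scoped InnerProductSpace ComplexConjugate

noncomputable def quatJ : EuclideanSpace ℂ (Fin 2) →ₗ[ℝ] EuclideanSpace ℂ (Fin 2) where
  toFun z := WithLp.toLp 2 ![conj (z 1), -conj (z 0)]
  map_add' u v := by
    ext i
    fin_cases i <;> simp; ring
  map_smul' r z := by
    ext i
    fin_cases i <;> simp [Complex.real_smul]

namespace quatJ

variable (u v z : EuclideanSpace ℂ (Fin 2))

@[simp] lemma apply_zero : quatJ z 0 = conj (z 1) := rfl

@[simp] lemma apply_one : quatJ z 1 = -conj (z 0) := rfl

lemma map_I_smul : quatJ (Complex.I • z) = -(Complex.I • quatJ z) := by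
  ext i
  fin_cases i <;> simp

lemma inner_apply_right : ⟪u, quatJ v⟫_ℂ = -conj ⟪quatJ u, v⟫_ℂ := by
  simp [PiLp.inner_apply, Fin.sum_univ_two]

lemma re_inner_add_re_inner : (⟪quatJ u, v⟫_ℂ).re + (⟪u, quatJ v⟫_ℂ).re = 0 := by
  rw [inner_apply_right, Complex.neg_re, Complex.conj_re, add_neg_cancel]

lemma inner_self_apply : ⟪z, quatJ z⟫_ℂ = 0 := by
  simp [PiLp.inner_apply, Fin.sum_univ_two]
  ring

lemma ne_zero {z : EuclideanSpace ℂ (Fin 2)} (hz : z ≠ 0) : quatJ z ≠ 0 := by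
  contrapose! hz
  ext i
  fin_cases i
  · simpa using congr_fun (congrArg WithLp.ofLp hz) 1
  · simpa using congr_fun (congrArg WithLp.ofLp hz) 0

end quatJ

lemma notMem_span_real_singleton_of_inner_eq_zero {E : Type*} [NormedAddCommGroup E]
    [InnerProductSpace ℂ E] {v w : E} (hw : w ≠ 0) (h : ⟪v, w⟫_ℂ = 0) :
    w ∉ Submodule.span ℝ {v} := by
  rw [Submodule.mem_span_singleton]
  rintro ⟨a, rfl⟩
  rw [← Complex.coe_smul] at h hw
  apply hw
  rw [← inner_self_eq_zero (𝕜 := ℂ), inner_smul_left, h, mul_zero]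

lemma quatJ_bracket_notMem_span {z : EuclideanSpace ℂ (Fin 2)} (hz : z ≠ 0) :
    quatJ (Complex.I • z) - Complex.I • quatJ z ∉ Submodule.span ℝ {Complex.I • z} := by
  have hbracket : quatJ (Complex.I • z) - Complex.I • quatJ z = (-2 * Complex.I) • quatJ z := by
    rw [quatJ.map_I_smul, mul_smul, ← sub_eq_zero]
    module
  rw [hbracket]
  refine notMem_span_real_singleton_of_inner_eq_zero ?_ ?_
  · exact smul_ne_zero (by simp) (quatJ.ne_zero hz)
  · rw [inner_smul_left, inner_smul_right, quatJ.inner_self_apply, mul_zero, mul_zero]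

/-- **The remark after Corollary 2.** Corollary 2 fails without integrability of the
orthogonal distribution: on the round `S³ ⊂ ℂ²` with the Hopf foliation (leaves the orbits
of `z ↦ e^{iθ}z`, whose tangent field is `T(z) = i•z`), which is minimal with compact
leaves and non-integrable orthogonal (contact) distribution, there is a Killing field —
a skew-adjoint (real-)linear vector field `X` — that is not foliation preserving: at some
`z ∈ S³` the bracket `[X,T](z) = X(i•z) - i•X(z)` is not tangent to the Hopf fiber
through `z`, i.e. not an ℝ-multiple of `i•z`. -/
theorem stmt16 :
    ∃ X : EuclideanSpace ℂ (Fin 2) →ₗ[ℝ] EuclideanSpace ℂ (Fin 2),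
      (∀ u v : EuclideanSpace ℂ (Fin 2),
          (⟪X u, v⟫_ℂ).re + (⟪u, X v⟫_ℂ).re = 0) ∧
      ∃ z : EuclideanSpace ℂ (Fin 2), ‖z‖ = 1 ∧
        X (Complex.I • z) - Complex.I • X z ∉
          Submodule.span ℝ {(Complex.I • z : EuclideanSpace ℂ (Fin 2))} := by
  refine ⟨quatJ, quatJ.re_inner_add_re_inner, EuclideanSpace.single 0 1, by simp, ?_⟩
  exact quatJ_bracket_notMem_span (by simp)
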